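/- arXiv:2506.12660 — 2 statements merged into one kernel-verified Lean document; each statement's English description precedes it below -/
import Mathlib

section
/- In a minimally non-perfectly divisible graph G, every vertex belongs to a largest clique of G, i.e., for every vertex x of G there is a clique K of G with |K| = ω(G) and x ∈ K. -/
open SimpleGraph

/-- A graph is perfect if every induced subgraph has chromatic number equal to
its clique number. -/
def IsPerfect {W : Type*} (G : SimpleGraph W) : Prop :=
  ∀ s : Set W, (G.induce s).chromaticNumber = ((G.induce s).cliqueNum : ℕ∞)

/-- `(A, B)` is a good partition of the induced subgraph `G[s]`:
`A` and `B` partition `s`, `G[A]` is perfect and `ω(G[B]) < ω(G[s])`. -/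
def GoodPartition {W : Type*} (G : SimpleGraph W) (s A B : Set W) : Prop :=
  A ∪ B = s ∧ Disjoint A B ∧ IsPerfect (G.induce A) ∧
    (G.induce B).cliqueNum < (G.induce s).cliqueNum

/-- A graph is perfectly divisible if every induced subgraph with at least one
edge admits a good partition. -/
def PerfectlyDivisible {W : Type*} (G : SimpleGraph W) : Prop :=
  ∀ s : Set W, (G.induce s).edgeSet.Nonempty → ∃ A B : Set W, GoodPartition G s A B

/-- A graph is minimally non-perfectly divisible if it is not perfectly
divisible but every proper induced subgraph is. -/
def MNPD {W : Type*} (G : SimpleGraph W) : Prop :=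
  ¬ PerfectlyDivisible G ∧ ∀ s : Set W, s ≠ Set.univ → PerfectlyDivisible (G.induce s)

/-- `C` is a clique cutset of `G`: `C` is a clique and `G - C` is disconnected,
i.e. the remaining vertices split into two nonempty parts with no edges between them. -/
def IsCliqueCutset {W : Type*} (G : SimpleGraph W) (C : Set W) : Prop :=
  G.IsClique C ∧ ∃ V1 V2 : Set W, V1.Nonempty ∧ V2.Nonempty ∧ Disjoint V1 V2 ∧
    V1 ∪ V2 = Cᶜ ∧ ∀ x ∈ V1, ∀ y ∈ V2, ¬ G.Adj x y

/-!
If `x` lies in no largest clique of `G`, then `ω(G - x) = ω(G)`, and adding `x` to a set `B`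
with `ω(G[B]) < ω(G)` keeps the clique number below `ω(G)`: a clique of size `ω(G)` in
`G[B + x]` would be a largest clique of `G` through `x`. Hence a good partition `(A, B)` of
`G - x`, which exists by minimality, yields the good partition `(A, B + x)` of `G`; together with
minimality for the other proper induced subgraphs, `G` would be perfectly divisible.
-/

namespace SimpleGraph

variable {α β : Type*} {G : SimpleGraph α} {H : SimpleGraph β}

theorem cliqueFree_iff_cliqueNum_lt [Finite α] {n : ℕ} : G.CliqueFree n ↔ G.cliqueNum < n := by
  refine ⟨fun h => ?_, fun h K hK => (hK.card_eq ▸ hK.isClique.card_le_cliqueNum).not_gt h⟩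
  obtain ⟨K, hK⟩ := G.exists_isNClique_cliqueNum
  by_contra! hn
  exact h.mono hn K hK

theorem one_lt_cliqueNum_iff [Finite α] : 1 < G.cliqueNum ↔ G.edgeSet.Nonempty := by
  rw [edgeSet_nonempty, Ne, ← cliqueFree_two, cliqueFree_iff_cliqueNum_lt]
  omega

theorem cliqueNum_le_of_isContained [Finite α] [Finite β] (h : G ⊑ H) :
    G.cliqueNum ≤ H.cliqueNum :=
  Nat.lt_succ_iff.mp <| cliqueFree_iff_cliqueNum_lt.mp <|
    (cliqueFree_iff_cliqueNum_lt.mpr H.cliqueNum.lt_succ_self).comap h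

theorem cliqueNum_congr [Finite α] [Finite β] (e : G ≃g H) : G.cliqueNum = H.cliqueNum :=
  le_antisymm (cliqueNum_le_of_isContained e.isContained)
    (cliqueNum_le_of_isContained e.isContained')

theorem edgeSet_nonempty_congr (e : G ≃g H) : G.edgeSet.Nonempty ↔ H.edgeSet.Nonempty := by
  simpa only [Set.nonempty_coe_sort] using e.mapEdgeSet.nonempty_congr

theorem cliqueNum_induce_lt_iff [Finite α] {s : Set α} {n : ℕ} :
    (G.induce s).cliqueNum < n ↔ G.CliqueFreeOn s n := by
  rw [← cliqueFree_iff_cliqueNum_lt, cliqueFree_induce_iff]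

noncomputable def induceInduceIso (G : SimpleGraph α) (s : Set α) (A : Set s) :
    (G.induce s).induce A ≃g G.induce (Subtype.val '' A) where
  toEquiv := Equiv.Set.image Subtype.val A Subtype.val_injective
  map_rel_iff' := by simp [Equiv.Set.image, Equiv.Set.imageOfInjOn]

section NotInLargestClique

variable [Finite α] {x : α}

theorem cliqueNum_induce_compl_singleton_of_notMem_largestClique
    (hx : ∀ K : Finset α, G.IsNClique G.cliqueNum K → x ∉ K) :
    (G.induce {x}ᶜ).cliqueNum = G.cliqueNum := by
  refine (G.cliqueNum_induce_le _).antisymm (not_lt.mp fun hlt => ?_)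
  obtain ⟨K, hK⟩ := G.exists_isNClique_cliqueNum
  refine cliqueNum_induce_lt_iff.mp hlt ?_ hK
  simpa [Set.subset_compl_singleton_iff] using hx K hK

theorem cliqueNum_induce_insert_lt_of_notMem_largestClique
    (hx : ∀ K : Finset α, G.IsNClique G.cliqueNum K → x ∉ K) {u : Set α}
    (hu : (G.induce u).cliqueNum < G.cliqueNum) :
    (G.induce (insert x u)).cliqueNum < G.cliqueNum := by
  rw [cliqueNum_induce_lt_iff] at hu ⊢
  intro K hKu hK
  refine hu (fun v hv => ?_) hK
  obtain rfl | hvu := hKu hv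
  · exact absurd hv (hx K hK)
  · exact hvu

end NotInLargestClique

end SimpleGraph

theorem IsPerfect.of_iso {α β : Type*} [Finite α] [Finite β] {G : SimpleGraph α}
    {H : SimpleGraph β} (e : G ≃g H) (hG : IsPerfect G) : IsPerfect H := by
  intro s
  have e' : H.induce s ≃g G.induce (e.symm '' s) :=
    e.symm.induce (e.symm.injective.injOn.bijOn_image)
  rw [chromaticNumber_congr e', cliqueNum_congr e']
  exact hG _

section Partitions

variable {α : Type*} [Finite α] {G : SimpleGraph α}

theorem GoodPartition.image_val {s : Set α} {u A B : Set s}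
    (h : GoodPartition (G.induce s) u A B) :
    GoodPartition G (Subtype.val '' u) (Subtype.val '' A) (Subtype.val '' B) := by
  obtain ⟨hunion, hdisj, hperf, hlt⟩ := h
  refine ⟨by rw [← Set.image_union, hunion],
    (Set.disjoint_image_iff Subtype.val_injective).mpr hdisj,
    hperf.of_iso (induceInduceIso G s A), ?_⟩
  rwa [← cliqueNum_congr (induceInduceIso G s B), ← cliqueNum_congr (induceInduceIso G s u)]

theorem PerfectlyDivisible.exists_goodPartition_of_induce {s : Set α}
    (h : PerfectlyDivisible (G.induce s)) (hs : (G.induce s).edgeSet.Nonempty) :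
    ∃ A B : Set α, GoodPartition G s A B := by
  obtain ⟨A, B, hAB⟩ := h Set.univ ((edgeSet_nonempty_congr (induceUnivIso _)).mpr hs)
  exact ⟨_, _, by simpa only [Set.image_univ, Subtype.range_coe] using hAB.image_val⟩

theorem GoodPartition.insert_of_notMem_largestClique {x : α} {A B : Set α}
    (hx : ∀ K : Finset α, G.IsNClique G.cliqueNum K → x ∉ K)
    (h : GoodPartition G {x}ᶜ A B) : GoodPartition G Set.univ A (insert x B) := by
  obtain ⟨hunion, hdisj, hperf, hlt⟩ := h
  refine ⟨by rw [Set.union_insert, hunion, Set.insert_eq, Set.union_compl_self],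
    Set.disjoint_insert_right.mpr ⟨fun hxA => (hunion ▸ Set.mem_union_left B hxA) rfl, hdisj⟩,
    hperf, ?_⟩
  rw [cliqueNum_congr (induceUnivIso G)]
  rw [cliqueNum_induce_compl_singleton_of_notMem_largestClique hx] at hlt
  exact cliqueNum_induce_insert_lt_of_notMem_largestClique hx hlt

end Partitions

/-- In a minimally non-perfectly divisible graph, every vertex belongs to a largest clique. -/
theorem MNPD_every_vertex_in_largest_clique {V : Type*} [Fintype V] (G : SimpleGraph V)
    (hmnpd : MNPD G) :
    ∀ x : V, ∃ K : Finset V, G.IsNClique G.cliqueNum K ∧ x ∈ K := by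
  intro x
  by_contra! hx
  obtain ⟨hnotPD, hminimal⟩ := hmnpd
  have hcompl : ({x}ᶜ : Set V) ≠ Set.univ := fun h => (h.symm ▸ Set.mem_univ x) rfl
  refine hnotPD fun s hs => ?_
  obtain rfl | hsu := eq_or_ne s Set.univ
  · have hedge : (G.induce {x}ᶜ).edgeSet.Nonempty := by
      rwa [← one_lt_cliqueNum_iff, cliqueNum_induce_compl_singleton_of_notMem_largestClique hx,
        ← cliqueNum_congr (induceUnivIso G), one_lt_cliqueNum_iff]
    obtain ⟨A, B, hAB⟩ := (hminimal _ hcompl).exists_goodPartition_of_induce hedge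
    exact ⟨A, insert x B, hAB.insert_of_notMem_largestClique hx⟩
  · exact (hminimal s hsu).exists_goodPartition_of_induce hs
end

section
/- The chromatic number of a perfectly divisible graph G is at most ω(G)², i.e., χ(G) ≤ ω(G)² for every perfectly divisible graph G. -/
open SimpleGraph

/-! Induction on the clique number. In a good partition `(A, B)` of an induced subgraph with
clique number at most `k + 1`, the perfect part `A` needs at most `k + 1` colours and the part `B`,
whose clique number is at most `k`, needs at most `k ^ 2` by induction; with disjoint palettes this
gives `(k + 1) + k ^ 2 ≤ (k + 1) ^ 2` colours. -/

namespace SimpleGraph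

variable {V W : Type*} {G : SimpleGraph V} {H : SimpleGraph W}

lemma Copy.cliqueNum_le [Finite W] (f : Copy G H) : G.cliqueNum ≤ H.cliqueNum := by
  obtain ⟨s, hs⟩ := G.exists_isNClique_cliqueNum
  have hmap : G.map f.toEmbedding ≤ H := by
    rintro _ _ ⟨-, u, v, huv, rfl, rfl⟩
    exact f.toHom.map_adj huv
  have hclique := (hs.map (f := f.toEmbedding)).mono hmap
  rw [← hclique.card_eq]
  exact hclique.isClique.card_le_cliqueNum

lemma cliqueNum_induce_mono [Finite V] {A B : Set V} (h : A ⊆ B) :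
    (G.induce A).cliqueNum ≤ (G.induce B).cliqueNum :=
  (induceHomOfLE G h).toCopy.cliqueNum_le

lemma one_le_cliqueNum [Finite V] [Nonempty V] : 1 ≤ G.cliqueNum := by
  inhabit V
  simpa using IsClique.card_le_cliqueNum (G := G) (t := {default}) (tc := by simp)

lemma colorable_of_colorable_induce_univ {n : ℕ} (h : (G.induce Set.univ).Colorable n) :
    G.Colorable n :=
  h.of_hom (induceUnivIso G).symm.toEmbedding.toHom

lemma colorable_induce_union {A B : Set V} {m n : ℕ} (hA : (G.induce A).Colorable m)
    (hB : (G.induce B).Colorable n) : (G.induce (A ∪ B)).Colorable (m + n) := by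
  classical
  obtain ⟨cA⟩ := hA
  obtain ⟨cB⟩ := hB
  let c : (G.induce (A ∪ B)).Coloring (Fin m ⊕ Fin n) :=
    Coloring.mk (fun v => if h : v.1 ∈ A then .inl (cA ⟨v, h⟩)
      else .inr (cB ⟨v, v.2.resolve_left h⟩)) <| by
        rintro ⟨u, hu⟩ ⟨v, hv⟩ huv
        dsimp only
        split_ifs
        · simpa using cA.valid (show (G.induce A).Adj ⟨u, ‹_›⟩ ⟨v, ‹_›⟩ from huv)
        · simp
        · simp
        · simpa using cB.valid (show (G.induce B).Adj ⟨u, _⟩ ⟨v, _⟩ from huv)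
  simpa using c.colorable

end SimpleGraph

lemma IsPerfect.colorable_cliqueNum {W : Type*} [Finite W] {G : SimpleGraph W}
    (h : IsPerfect G) : G.Colorable G.cliqueNum := by
  refine colorable_of_colorable_induce_univ (chromaticNumber_le_iff_colorable.mp ?_)
  rw [h Set.univ]
  exact_mod_cast cliqueNum_induce_le Set.univ

lemma PerfectlyDivisible.colorable_induce_sq {V : Type*} [Finite V] {G : SimpleGraph V}
    (hpd : PerfectlyDivisible G) (k : ℕ) (s : Set V) (hs : (G.induce s).cliqueNum ≤ k) :
    (G.induce s).Colorable (k ^ 2) := by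
  induction k generalizing s with
  | zero =>
    have : IsEmpty s := not_nonempty_iff.mp fun _ ↦ by
      have := one_le_cliqueNum (G := G.induce s)
      omega
    exact .of_isEmpty _
  | succ k ih =>
    by_cases hedge : (G.induce s).edgeSet.Nonempty
    · obtain ⟨A, B, rfl, -, hA, hB⟩ := hpd s hedge
      have hcA : (G.induce A).Colorable (k + 1) :=
        hA.colorable_cliqueNum.mono
          ((cliqueNum_induce_mono Set.subset_union_left).trans hs)
      have hcB : (G.induce B).Colorable (k ^ 2) := ih B (by omega)
      exact (colorable_induce_union hcA hcB).mono (by nlinarith)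
    · have hbot : G.induce s = ⊥ := edgeSet_eq_empty.mp (Set.not_nonempty_iff_eq_empty.mp hedge)
      exact (colorable_one_iff.mpr hbot).mono (Nat.one_le_pow _ _ k.succ_pos)

/-- The chromatic number of a perfectly divisible graph is at most the square of its
clique number. -/
theorem chromatic_le_cliqueNum_sq_of_perfectlyDivisible {V : Type*} [Fintype V]
    (G : SimpleGraph V) (hpd : PerfectlyDivisible G) :
    G.chromaticNumber ≤ (G.cliqueNum ^ 2 : ℕ) := by
  rw [chromaticNumber_le_iff_colorable]
  exact colorable_of_colorable_induce_univ
    (hpd.colorable_induce_sq _ Set.univ (cliqueNum_induce_le Set.univ))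
end
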